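/- Let $c \ge 3$ be an integer, set $n = c$, $t = 2$, $b_1 = b_2 = 0$ and $a_0 = a_1 = \cdots = a_c = 1$ (so there are $c+1$ values $a_j$, all equal to $1$). Then the conjectured dimension $\lambda_c + K_3 + K_4 + \cdots + K_c$ equals $(c+1)^2 - 3 = c(c+1) + c - 2$, where $\lambda_c = \sum_{i,j}\binom{a_i - b_j + n}{n} + \sum_{i,j}\binom{b_j - a_i + n}{n} - \sum_{i,j}\binom{a_i - a_j + n}{n} - \sum_{i,j}\binom{b_i - b_j + n}{n} + 1$ and each $K_{i+3}$ (for $0 \le i \le c-3$) vanishes. In particular, since $c \ge 3$, this conjectured dimension strictly exceeds $c(c+1)$. -/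
import Mathlib


open Finset

/-- Binomial coefficient `(a choose b)` for an integer `a`, with the convention that
it vanishes when `a < 0` (and when `a < b`). -/
def ch (a : ℤ) (b : ℕ) : ℤ := if 0 ≤ a then ((a.toNat).choose b : ℤ) else 0

/-- The invariant `λ_c` of the paper: indices of `a` range over `0,…,t+c-2` and
those of `b` over `1,…,t`. -/
def lambdaC (n t c : ℕ) (a b : ℕ → ℤ) : ℤ :=
  (∑ i ∈ range (t + c - 1), ∑ j ∈ Icc 1 t, ch (a i - b j + n) n) +
  (∑ i ∈ range (t + c - 1), ∑ j ∈ Icc 1 t, ch (b j - a i + n) n) -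
  (∑ i ∈ range (t + c - 1), ∑ j ∈ range (t + c - 1), ch (a i - a j + n) n) -
  (∑ i ∈ Icc 1 t, ∑ j ∈ Icc 1 t, ch (b i - b j + n) n) + 1

/-- `ℓ_m = ∑_{j=0}^{t+m-2} a_j - ∑_{k=1}^t b_k`. -/
def ellC (t m : ℕ) (a b : ℕ → ℤ) : ℤ :=
  (∑ j ∈ range (t + m - 1), a j) - ∑ k ∈ Icc 1 t, b k

/-- The correction term `K_{i+3}` of the paper, for `0 ≤ i ≤ c-3`:
`K_{i+3} = ∑_{r+s=i} ∑_{0 ≤ i_1 < ⋯ < i_r ≤ t+i} ∑_{1 ≤ j_1 ≤ ⋯ ≤ j_s ≤ t}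
  (-1)^{i-r} C(h_i + a_{i_1}+⋯+a_{i_r} + b_{j_1}+⋯+b_{j_s}, n)`
where `h_i = 2 a_{t+i+1} - ℓ_{i+3} + n`; strictly increasing tuples are encoded as
`r`-subsets of `{0,…,t+i}` and weakly increasing tuples as multisets over `{1,…,t}`. -/
def Kterm (n t : ℕ) (a b : ℕ → ℤ) (i : ℕ) : ℤ :=
  ∑ r ∈ range (i + 1),
    ∑ S ∈ powersetCard r (range (t + i + 1)),
      ∑ m : Sym (Fin t) (i - r),
        (-1 : ℤ) ^ (i - r) *
          ch ((2 * a (t + i + 1) - ellC t (i + 3) a b + n) +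
              (∑ j ∈ S, a j) + ((m : Multiset (Fin t)).map fun j => b (j + 1)).sum) n

lemma ch_eq_zero_of_lt {a : ℤ} {n : ℕ} (h : a < n) : ch a n = 0 := by
  unfold ch
  split_ifs with h0
  · norm_cast
    exact Nat.choose_eq_zero_of_lt (by omega)
  · rfl

lemma ch_natCast (k n : ℕ) : ch (k : ℤ) n = k.choose n := by
  simp [ch]

lemma K_zero (c i : ℕ) (hc : 3 ≤ c) (hi : i ≤ c - 3) :
    Kterm c 2 (fun _ => 1) (fun _ => 0) i = 0 := by
  unfold Kterm ellC
  apply Finset.sum_eq_zero; intro r hr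
  apply Finset.sum_eq_zero; intro S hS
  apply Finset.sum_eq_zero; intro m _
  have hr' : r ≤ i := by simpa using Nat.lt_succ_iff.mp (Finset.mem_range.mp hr)
  have hScard : S.card = r := (Finset.mem_powersetCard.mp hS).2
  simp only [Finset.sum_const, hScard, card_range, nsmul_eq_mul, mul_one,
    Multiset.map_const', Multiset.sum_replicate, smul_zero]
  rw [mul_eq_zero]
  right
  apply ch_eq_zero_of_lt
  push_cast
  omega

lemma lambda_val (c : ℕ) (hc : 3 ≤ c) :
    lambdaC c 2 c (fun _ => 1) (fun _ => 0) = ((c:ℤ)+1)^2 - 3 := by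
  unfold lambdaC
  have h1 : ch ((1:ℤ) - 0 + (c:ℤ)) c = (c:ℤ) + 1 := by
    have e : ((1:ℤ) - 0 + (c:ℤ)) = ((c+1 : ℕ) : ℤ) := by push_cast; ring
    rw [e, ch_natCast, Nat.choose_succ_self_right]; push_cast; ring
  have h2 : ch ((0:ℤ) - 1 + (c:ℤ)) c = 0 := ch_eq_zero_of_lt (by omega)
  have h3 : ch ((1:ℤ) - 1 + (c:ℤ)) c = 1 := by
    have e : ((1:ℤ) - 1 + (c:ℤ)) = ((c : ℕ) : ℤ) := by push_cast; ring
    rw [e, ch_natCast, Nat.choose_self]; norm_num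
  have h4 : ch ((0:ℤ) - 0 + (c:ℤ)) c = 1 := by
    have e : ((0:ℤ) - 0 + (c:ℤ)) = ((c : ℕ) : ℤ) := by push_cast; ring
    rw [e, ch_natCast, Nat.choose_self]; norm_num
  simp only [h1, h2, h3, h4, Finset.sum_const, card_range, Nat.card_Icc, nsmul_eq_mul]
  have e2 : 2 + c - 1 = c + 1 := by omega
  rw [e2]
  push_cast
  ring

/-- The counterexample computation: for `n = c ≥ 3`, `t = 2`, `b₁ = b₂ = 0` and
`a_0 = ⋯ = a_c = 1`, every `K_{i+3}` (for `0 ≤ i ≤ c-3`) vanishes, the conjectured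
dimension `λ_c + K_3 + ⋯ + K_c` equals `(c+1)² - 3 = c(c+1) + c - 2`, and this strictly
exceeds `c(c+1)`. -/
theorem conjectured_dimension_counterexample (c : ℕ) (hc : 3 ≤ c) :
    (∀ i ≤ c - 3, Kterm c 2 (fun _ => 1) (fun _ => 0) i = 0) ∧
    lambdaC c 2 c (fun _ => 1) (fun _ => 0) +
        (∑ i ∈ range (c - 2), Kterm c 2 (fun _ => 1) (fun _ => 0) i) =
      ((c : ℤ) + 1) ^ 2 - 3 ∧
    ((c : ℤ) + 1) ^ 2 - 3 = c * (c + 1) + c - 2 ∧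
    (c : ℤ) * (c + 1) < ((c : ℤ) + 1) ^ 2 - 3 := by
  refine ⟨fun i hi => K_zero c i hc hi, ?_, by ring, ?_⟩
  · rw [Finset.sum_eq_zero (fun i hi => K_zero c i hc (by
      have := Finset.mem_range.mp hi; omega)), add_zero, lambda_val c hc]
  · have : (3:ℤ) ≤ c := by exact_mod_cast hc
    nlinarith
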